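/- arXiv:2309.11702 — 8 statements merged into one kernel-verified Lean document; each statement's English description precedes it below -/
import Mathlib

section
/- Let B be a d×d positive definite real matrix, let C be a d×d positive semidefinite real matrix, and set A = B + C. Then for every x ∈ ℝ^d, (xᵀAx)·det(B) ≤ det(A)·(xᵀBx); in particular, for every x ≠ 0, xᵀAx / xᵀBx ≤ det(A)/det(B). -/
/-!
Writing `B = SᵀS`, we get `A = Sᵀ(1 + D)S` with `D = S⁻ᵀ C S⁻¹` positive semidefinite, and both
sides of the inequality scale by `(det S)²` under `x ↦ Sx`; so it suffices to treat `B = 1`.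
In an orthonormal eigenbasis of `D` with eigenvalues `λᵢ ≥ 0`, `xᵀ(1 + D)x = ∑ (1 + λᵢ) cᵢ²`, and
each `1 + λᵢ` is at most `∏ⱼ (1 + λⱼ) = det (1 + D)` because every factor is at least `1`.
-/

open Matrix

variable {n : Type*} [Fintype n]

theorem Matrix.dotProduct_transpose_mul_mul_mulVec {R : Type*} [CommSemiring R]
    (S M : Matrix n n R) (x : n → R) :
    x ⬝ᵥ ((Sᵀ * M * S) *ᵥ x) = (S *ᵥ x) ⬝ᵥ (M *ᵥ (S *ᵥ x)) := by
  rw [← mulVec_mulVec, ← mulVec_mulVec, dotProduct_mulVec, vecMul_transpose]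

variable [DecidableEq n]

theorem Matrix.det_transpose_mul_mul_of_mem_orthogonalGroup {U : Matrix n n ℝ}
    (hU : U ∈ orthogonalGroup n ℝ) (M : Matrix n n ℝ) : (Uᵀ * M * U).det = M.det := by
  rw [det_mul, det_mul, mul_right_comm, ← det_mul, (mem_orthogonalGroup_iff' n ℝ).mp hU,
    det_one, one_mul]

theorem Matrix.dotProduct_transpose_mul_diagonal_mul_mulVec_le {U : Matrix n n ℝ}
    (hU : U ∈ orthogonalGroup n ℝ) {μ : n → ℝ} (hμ : ∀ i, 1 ≤ μ i) (y : n → ℝ) :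
    y ⬝ᵥ ((Uᵀ * diagonal μ * U) *ᵥ y) ≤ (∏ i, μ i) * (y ⬝ᵥ y) := by
  have hnorm : y ⬝ᵥ y = (U *ᵥ y) ⬝ᵥ (U *ᵥ y) := by
    simpa [(mem_orthogonalGroup_iff' n ℝ).mp hU] using
      dotProduct_transpose_mul_mul_mulVec U 1 y
  rw [dotProduct_transpose_mul_mul_mulVec, hnorm]
  simp only [dotProduct, mulVec_diagonal, Finset.mul_sum]
  refine Finset.sum_le_sum fun i _ => ?_
  rw [mul_left_comm]
  exact mul_le_mul_of_nonneg_right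
    (Multiset.mem_le_prod_of_one_le hμ (Finset.mem_univ_val i)) (mul_self_nonneg _)

theorem Matrix.PosSemidef.dotProduct_one_add_mulVec_le_det_mul {D : Matrix n n ℝ}
    (hD : D.PosSemidef) (y : n → ℝ) :
    y ⬝ᵥ ((1 + D) *ᵥ y) ≤ (1 + D).det * (y ⬝ᵥ y) := by
  set U := (hD.1.eigenvectorUnitary : Matrix n n ℝ)ᵀ with hU_def
  have hU : U ∈ orthogonalGroup n ℝ := by
    rw [hU_def, ← conjTranspose_eq_transpose_of_trivial, ← star_eq_conjTranspose]
    exact Unitary.star_mem hD.1.eigenvectorUnitary.2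
  have hspec : D = Uᵀ * diagonal hD.1.eigenvalues * U := by
    simpa [U, star_eq_conjTranspose, ← conjTranspose_eq_transpose_of_trivial] using
      hD.1.spectral_theorem
  have hdiag : 1 + D = Uᵀ * diagonal (1 + hD.1.eigenvalues) * U := by
    have hdiag_add : diagonal (1 + hD.1.eigenvalues) = 1 + diagonal hD.1.eigenvalues := by
      rw [← diagonal_one, diagonal_add]; rfl
    rw [hdiag_add, Matrix.mul_add, Matrix.add_mul, Matrix.mul_one,
      (mem_orthogonalGroup_iff' n ℝ).mp hU, ← hspec]
  rw [hdiag, det_transpose_mul_mul_of_mem_orthogonalGroup hU, det_diagonal]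
  exact dotProduct_transpose_mul_diagonal_mul_mulVec_le hU
    (fun i => le_add_of_nonneg_right (hD.eigenvalues_nonneg i)) y

open scoped MatrixOrder in
theorem Matrix.PosDef.dotProduct_add_mulVec_mul_det_le {B C : Matrix n n ℝ} (hB : B.PosDef)
    (hC : C.PosSemidef) (x : n → ℝ) :
    x ⬝ᵥ ((B + C) *ᵥ x) * B.det ≤ (B + C).det * (x ⬝ᵥ (B *ᵥ x)) := by
  obtain ⟨S, hBS⟩ := CStarAlgebra.nonneg_iff_eq_star_mul_self.mp hB.posSemidef.nonneg
  rw [star_eq_conjTranspose, conjTranspose_eq_transpose_of_trivial] at hBS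
  have hS : IsUnit S.det := by
    have hdetB := hB.det_pos.ne'
    rw [hBS, det_mul, det_transpose] at hdetB
    exact isUnit_iff_ne_zero.mpr (left_ne_zero_of_mul hdetB)
  set D := (S⁻¹)ᵀ * C * S⁻¹
  have hD : D.PosSemidef := by
    simpa [D, conjTranspose_eq_transpose_of_trivial] using hC.conjTranspose_mul_mul_same S⁻¹
  have hBC : B + C = Sᵀ * (1 + D) * S := by
    rw [Matrix.mul_add, Matrix.add_mul, Matrix.mul_one, ← hBS, ← Matrix.mul_assoc,
      ← Matrix.mul_assoc, ← transpose_mul, nonsing_inv_mul _ hS, transpose_one,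
      Matrix.one_mul, Matrix.mul_assoc, nonsing_inv_mul _ hS, Matrix.mul_one]
  have hB' : B = Sᵀ * 1 * S := by rw [Matrix.mul_one, hBS]
  have hBx : x ⬝ᵥ (B *ᵥ x) = (S *ᵥ x) ⬝ᵥ (S *ᵥ x) := by
    rw [hB', dotProduct_transpose_mul_mul_mulVec, one_mulVec]
  have hAx : x ⬝ᵥ ((B + C) *ᵥ x) = (S *ᵥ x) ⬝ᵥ ((1 + D) *ᵥ (S *ᵥ x)) := by
    rw [hBC, dotProduct_transpose_mul_mul_mulVec]
  have hdet : (B + C).det = (1 + D).det * B.det := by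
    rw [hBC, hB', det_mul, det_mul, det_mul, det_mul, det_one]; ring
  rw [hAx, hBx, hdet]
  calc _ ≤ (1 + D).det * ((S *ᵥ x) ⬝ᵥ (S *ᵥ x)) * B.det :=
        mul_le_mul_of_nonneg_right (hD.dotProduct_one_add_mulVec_le_det_mul _) hB.det_pos.le
    _ = _ := by ring

/-- For `B` positive definite, `C` positive semidefinite and `A = B + C`,
the quadratic-form ratio is bounded by the determinant ratio. -/
theorem quadratic_det_inequality {d : ℕ} (B C A : Matrix (Fin d) (Fin d) ℝ)
    (hB : B.PosDef) (hC : C.PosSemidef) (hA : A = B + C) :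
    (∀ x : Fin d → ℝ, (x ⬝ᵥ (A *ᵥ x)) * B.det ≤ A.det * (x ⬝ᵥ (B *ᵥ x))) ∧
    (∀ x : Fin d → ℝ, x ≠ 0 →
      (x ⬝ᵥ (A *ᵥ x)) / (x ⬝ᵥ (B *ᵥ x)) ≤ A.det / B.det) := by
  subst hA
  have hineq := hB.dotProduct_add_mulVec_mul_det_le hC
  refine ⟨hineq, fun x hx => ?_⟩
  have hxB : 0 < x ⬝ᵥ (B *ᵥ x) := by simpa using hB.dotProduct_mulVec_pos hx
  rw [div_le_div_iff₀ hxB hB.det_pos]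
  exact hineq x
end

section
/- Let B be a d×d positive definite real matrix, let C be a d×d positive semidefinite real matrix, and set A = B + C. Then for every x ∈ ℝ^d, (xᵀB⁻¹x)·det(B) ≤ det(A)·(xᵀA⁻¹x); equivalently, xᵀB⁻¹x ≤ (det(A)/det(B))·xᵀA⁻¹x. -/
open Matrix Finset
open scoped MatrixOrder

/-- Key lemma: if `M` is positive definite and `M - 1` is positive semidefinite,
then `y⬝ᵥy ≤ det M * yᵀM⁻¹y`. -/
lemma aux_quad {d : ℕ} {M : Matrix (Fin d) (Fin d) ℝ} (hM : M.PosDef)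
    (h1 : (M - 1).PosSemidef) (y : Fin d → ℝ) :
    y ⬝ᵥ y ≤ M.det * (y ⬝ᵥ (M⁻¹ *ᵥ y)) := by
  have hH : M.IsHermitian := hM.isHermitian
  set μ : Fin d → ℝ := hH.eigenvalues with hμ
  set U : Matrix (Fin d) (Fin d) ℝ := (hH.eigenvectorUnitary : Matrix (Fin d) (Fin d) ℝ) with hU
  have hμpos : ∀ i, 0 < μ i := hM.eigenvalues_pos
  have hμ1 : ∀ i, 1 ≤ μ i := by
    intro i
    have hv := hH.mulVec_eigenvectorBasis i
    set v : Fin d → ℝ := ⇑(hH.eigenvectorBasis i) with hvdef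
    have hvv : v ⬝ᵥ v = 1 := by
      have := hH.eigenvectorBasis.orthonormal.1 i
      have h2 : @inner ℝ _ _ (hH.eigenvectorBasis i) (hH.eigenvectorBasis i) = (1:ℝ) := by
        rw [real_inner_self_eq_norm_sq, this]; norm_num
      rw [PiLp.inner_apply] at h2
      simpa [dotProduct, mul_comm, sq] using h2
    have := h1.dotProduct_mulVec_nonneg v
    have hcalc : star v ⬝ᵥ ((M - 1) *ᵥ v) = μ i - 1 := by
      rw [sub_mulVec, hv]
      simp [dotProduct_sub, dotProduct_smul, hvv, star_trivial]
      rfl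
    rw [hcalc] at this
    linarith
  have hUU : U * star U = 1 := (mem_unitaryGroup_iff).mp hH.eigenvectorUnitary.2
  have hUU' : star U * U = 1 := (mem_unitaryGroup_iff').mp hH.eigenvectorUnitary.2
  have hspec : M = U * diagonal μ * star U := by
    simpa [hU, hμ] using hH.spectral_theorem
  have hMinv : M⁻¹ = U * diagonal (fun i => (μ i)⁻¹) * star U := by
    apply inv_eq_right_inv
    rw [hspec]
    simp only [Matrix.mul_assoc]
    rw [← Matrix.mul_assoc (star U) U, hUU', Matrix.one_mul,
      ← Matrix.mul_assoc (diagonal μ), diagonal_mul_diagonal]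
    have : (fun i => μ i * (μ i)⁻¹) = fun _ => (1:ℝ) := by
      funext i; exact mul_inv_cancel₀ (hμpos i).ne'
    rw [this, diagonal_one, Matrix.one_mul, hUU]
  set c : Fin d → ℝ := star U *ᵥ y with hc
  have hstarU : star U = Uᵀ := by
    ext i j; simp [star_eq_conjTranspose, conjTranspose_apply]
  have hyc : y ᵥ* U = c := by
    rw [hc, hstarU, mulVec_transpose]
  have hquad : y ⬝ᵥ (M⁻¹ *ᵥ y) = ∑ i, c i * ((μ i)⁻¹ * c i) := by
    rw [hMinv, ← mulVec_mulVec, ← mulVec_mulVec, dotProduct_mulVec, hyc, ← hc]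
    simp [dotProduct, mulVec_diagonal]
  have hyy : y ⬝ᵥ y = ∑ i, c i * c i := by
    have h2 : y ⬝ᵥ (U *ᵥ c) = c ⬝ᵥ c := by rw [dotProduct_mulVec, hyc]
    have h3 : y ⬝ᵥ (U *ᵥ c) = y ⬝ᵥ y := by rw [hc, mulVec_mulVec, hUU, one_mulVec]
    exact h3.symm.trans h2
  have hdet : M.det = ∏ i, μ i := by
    simpa using hH.det_eq_prod_eigenvalues
  rw [hquad, hyy, hdet, Finset.mul_sum]
  apply Finset.sum_le_sum
  intro i _
  have herase : (∏ j, μ j) * (c i * ((μ i)⁻¹ * c i)) =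
      (∏ j ∈ univ.erase i, μ j) * (c i * c i) := by
    rw [← Finset.mul_prod_erase univ μ (mem_univ i)]
    field_simp [(hμpos i).ne']
  rw [herase]
  have h1le : (1:ℝ) ≤ ∏ j ∈ univ.erase i, μ j := by
    have := Finset.prod_le_prod (f := fun _ => (1:ℝ)) (g := μ)
      (fun _ _ => zero_le_one) (fun j _ => hμ1 j) (s := univ.erase i)
    simpa using this
  nlinarith [mul_self_nonneg (c i)]

/-- For a real symmetric matrix, the quadratic pairing can be moved across. -/
lemma aux_symm_dot {d : ℕ} {T : Matrix (Fin d) (Fin d) ℝ} (hT : T.IsHermitian)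
    (x z : Fin d → ℝ) : x ⬝ᵥ (T *ᵥ z) = (T *ᵥ x) ⬝ᵥ z := by
  have hTt : Tᵀ = T := by
    ext i j
    have := congrFun (congrFun hT i) j
    simpa [conjTranspose_apply] using this
  rw [dotProduct_mulVec]
  congr 1
  rw [← hTt, vecMul_transpose, hTt]

/-- For `B` positive definite, `C` positive semidefinite and `A = B + C`,
`xᵀB⁻¹x · det B ≤ det A · xᵀA⁻¹x`, equivalently
`xᵀB⁻¹x ≤ (det A / det B) · xᵀA⁻¹x`. -/
theorem inv_quadratic_det_inequality {d : ℕ} (B C A : Matrix (Fin d) (Fin d) ℝ)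
    (hB : B.PosDef) (hC : C.PosSemidef) (hA : A = B + C) :
    (∀ x : Fin d → ℝ, (x ⬝ᵥ (B⁻¹ *ᵥ x)) * B.det ≤ A.det * (x ⬝ᵥ (A⁻¹ *ᵥ x))) ∧
    (∀ x : Fin d → ℝ, x ⬝ᵥ (B⁻¹ *ᵥ x) ≤ (A.det / B.det) * (x ⬝ᵥ (A⁻¹ *ᵥ x))) := by
  have hBdet : 0 < B.det := hB.det_pos
  set S := CFC.sqrt B with hSdef
  have hS2 : S * S = B := CFC.sqrt_mul_sqrt_self B hB.posSemidef.nonneg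
  have hSh : S.IsHermitian := (CFC.sqrt_nonneg B).posSemidef.1
  have hSdet : S.det ≠ 0 := by
    intro h
    rw [← hS2, det_mul, h, mul_zero] at hBdet
    exact lt_irrefl _ hBdet
  have hSunit : IsUnit S.det := hSdet.isUnit
  have hSS : S * S⁻¹ = 1 := Matrix.mul_nonsing_inv S hSunit
  have hSS' : S⁻¹ * S = 1 := Matrix.nonsing_inv_mul S hSunit
  have hSinvH : (S⁻¹).IsHermitian := hSh.inv
  have hD : (S⁻¹ * C * S⁻¹).PosSemidef := by
    have := hC.mul_mul_conjTranspose_same S⁻¹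
    rwa [hSinvH.eq] at this
  set M := 1 + S⁻¹ * C * S⁻¹ with hMdef
  have hM1 : (M - 1).PosSemidef := by
    rw [hMdef, add_sub_cancel_left]
    exact hD
  have hMpd : M.PosDef := Matrix.PosDef.one.add_posSemidef hD
  have hAe : A = S * M * S := by
    rw [hA, hMdef, Matrix.mul_add, Matrix.add_mul, Matrix.mul_one, hS2]
    congr 1
    rw [← Matrix.mul_assoc, ← Matrix.mul_assoc, hSS, Matrix.one_mul, Matrix.mul_assoc, hSS',
      Matrix.mul_one]
  have hdetA : A.det = B.det * M.det := by
    rw [hAe, det_mul, det_mul, ← hS2, det_mul]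
    ring
  have hAinv : A⁻¹ = S⁻¹ * (M⁻¹ * S⁻¹) := by
    rw [hAe, Matrix.mul_inv_rev, Matrix.mul_inv_rev]
  have hBinv : B⁻¹ = S⁻¹ * S⁻¹ := by rw [← hS2, Matrix.mul_inv_rev]
  have key : ∀ x : Fin d → ℝ, (x ⬝ᵥ (B⁻¹ *ᵥ x)) * B.det ≤ A.det * (x ⬝ᵥ (A⁻¹ *ᵥ x)) := by
    intro x
    set y := S⁻¹ *ᵥ x with hy
    have hxB : x ⬝ᵥ (B⁻¹ *ᵥ x) = y ⬝ᵥ y := by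
      rw [hBinv, ← mulVec_mulVec, aux_symm_dot hSinvH]
    have hxA : x ⬝ᵥ (A⁻¹ *ᵥ x) = y ⬝ᵥ (M⁻¹ *ᵥ y) := by
      rw [hAinv, ← mulVec_mulVec, aux_symm_dot hSinvH, ← mulVec_mulVec]
    have := aux_quad hMpd hM1 y
    rw [hxB, hxA, hdetA]
    nlinarith [hBdet, this]
  refine ⟨key, fun x => ?_⟩
  have := key x
  rw [div_mul_eq_mul_div, le_div_iff₀ hBdet]
  exact this
end

section
/- Let V be a d×d positive definite real matrix, let X_1, …, X_n ∈ ℝ^d, and define V_t = V + Σ_{s=1}^t X_s X_sᵀ for t = 0, 1, …, n. Then log(det(V_n)/det(V)) ≤ Σ_{t=1}^n X_tᵀ V_{t-1}⁻¹ X_t. -/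
/-!
Each rank-one update multiplies the determinant by `1 + xᵀ A⁻¹ x` (matrix determinant lemma),
so `log (det Vₙ / det V)` telescopes into `∑ₜ log (1 + Xₜᵀ Vₜ⁻¹ Xₜ)`, and `log (1 + q) ≤ q`.
-/

open Matrix

namespace Matrix

variable {m : Type*} [Fintype m]

theorem PosDef.add_vecMulVec_self {A : Matrix m m ℝ} (hA : A.PosDef) (x : m → ℝ) :
    (A + vecMulVec x x).PosDef := by
  simpa using hA.add_posSemidef (posSemidef_vecMulVec_self_star x)

variable [DecidableEq m]

theorem det_add_vecMulVec {α : Type*} [CommRing α] {A : Matrix m m α} (hA : IsUnit A.det)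
    (u v : m → α) : (A + vecMulVec u v).det = A.det * (1 + v ⬝ᵥ (A⁻¹ *ᵥ u)) := by
  rw [vecMulVec_eq Unit, det_add_replicateCol_mul_replicateRow hA, Matrix.mul_assoc,
    ← replicateCol_mulVec, det_unique (1 + _), add_apply, one_apply_eq,
    replicateRow_mul_replicateCol_apply]

variable {A : Matrix m m ℝ}

theorem PosDef.dotProduct_inv_mulVec_nonneg (hA : A.PosDef) (x : m → ℝ) :
    0 ≤ x ⬝ᵥ (A⁻¹ *ᵥ x) := by
  simpa using hA.inv.posSemidef.dotProduct_mulVec_nonneg x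

theorem PosDef.log_det_add_vecMulVec_self_sub_le (hA : A.PosDef) (x : m → ℝ) :
    Real.log (A + vecMulVec x x).det - Real.log A.det ≤ x ⬝ᵥ (A⁻¹ *ᵥ x) := by
  have hq := hA.dotProduct_inv_mulVec_nonneg x
  rw [det_add_vecMulVec hA.det_pos.ne'.isUnit, Real.log_mul hA.det_pos.ne' (by positivity)]
  linarith [Real.log_le_sub_one_of_pos (by positivity : 0 < 1 + x ⬝ᵥ (A⁻¹ *ᵥ x))]

end Matrix

/-- Elliptical-potential log-determinant bound:
`log (det Vₙ / det V) ≤ ∑ₜ Xₜᵀ Vₜ₋₁⁻¹ Xₜ`, where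
`Vₜ = V + ∑_{s<t} X_s X_sᵀ` (vectors indexed from `0`). -/
theorem log_det_ratio_le_sum_quadratic {d : ℕ} (V : Matrix (Fin d) (Fin d) ℝ)
    (hV : V.PosDef) (n : ℕ) (X : ℕ → (Fin d → ℝ))
    (W : ℕ → Matrix (Fin d) (Fin d) ℝ)
    (hW : ∀ t, W t = V + ∑ s ∈ Finset.range t, vecMulVec (X s) (X s)) :
    Real.log ((W n).det / V.det) ≤
      ∑ t ∈ Finset.range n, X t ⬝ᵥ ((W t)⁻¹ *ᵥ X t) := by
  have hW_zero : W 0 = V := by simp [hW]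
  have hW_succ (t : ℕ) : W (t + 1) = W t + vecMulVec (X t) (X t) := by
    rw [hW, hW, Finset.sum_range_succ, add_assoc]
  have hW_posDef (t : ℕ) : (W t).PosDef := by
    induction t with
    | zero => rwa [hW_zero]
    | succ t ih => rw [hW_succ]; exact ih.add_vecMulVec_self (X t)
  calc Real.log ((W n).det / V.det)
      = ∑ t ∈ Finset.range n, (Real.log (W (t + 1)).det - Real.log (W t).det) := by
        rw [Finset.sum_range_sub (fun t ↦ Real.log (W t).det), hW_zero,
          Real.log_div (hW_posDef n).det_pos.ne' hV.det_pos.ne']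
    _ ≤ ∑ t ∈ Finset.range n, X t ⬝ᵥ ((W t)⁻¹ *ᵥ X t) := by
        gcongr with t
        rw [hW_succ]
        exact (hW_posDef t).log_det_add_vecMulVec_self_sub_le (X t)
end

section
/- Let d ≥ 1, let V be a d×d positive definite real matrix, let X_1, …, X_n ∈ ℝ^d satisfy ‖X_t‖₂ ≤ L for all t, and define V_n = V + Σ_{t=1}^n X_t X_tᵀ. Then det(V_n) ≤ ((trace(V) + n·L²)/d)^d. -/
open Matrix

lemma psd_vecMulVec {d : ℕ} (x : Fin d → ℝ) : (vecMulVec x x).PosSemidef := by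
  rw [posSemidef_iff_dotProduct_mulVec]
  constructor
  · ext i j; simp [vecMulVec_apply, mul_comm]
  · intro y
    have h : ∀ i, (vecMulVec x x *ᵥ y) i = x i * (x ⬝ᵥ y) := by
      intro i
      simp [mulVec, dotProduct, vecMulVec_apply, Finset.mul_sum, mul_assoc]
    have key : star y ⬝ᵥ (vecMulVec x x *ᵥ y) = (x ⬝ᵥ y) * (x ⬝ᵥ y) := by
      simp only [dotProduct, h, Pi.star_apply, star_trivial]
      rw [Finset.sum_mul]
      exact Finset.sum_congr rfl fun i _ => by ring
    rw [key]
    exact mul_self_nonneg _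

lemma trace_eq_sum_eigs {d : ℕ} {A : Matrix (Fin d) (Fin d) ℝ} (hA : A.IsHermitian) :
    A.trace = ∑ i, hA.eigenvalues i := by
  simpa using hA.trace_eq_sum_eigenvalues

/-- Determinant–trace inequality: if `‖Xₜ‖₂ ≤ L` for all `t` and
`Vₙ = V + ∑ₜ Xₜ Xₜᵀ`, then `det Vₙ ≤ ((trace V + n L²)/d)^d`. -/
theorem det_le_trace_pow {d : ℕ} (hd : 1 ≤ d) (V : Matrix (Fin d) (Fin d) ℝ)
    (hV : V.PosDef) (n : ℕ) (L : ℝ) (X : ℕ → (Fin d → ℝ))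
    (hX : ∀ t ∈ Finset.range n, Real.sqrt (X t ⬝ᵥ X t) ≤ L)
    (Vn : Matrix (Fin d) (Fin d) ℝ)
    (hVn : Vn = V + ∑ t ∈ Finset.range n, vecMulVec (X t) (X t)) :
    Vn.det ≤ ((V.trace + n * L ^ 2) / d) ^ d := by
  have hdpos : (0:ℝ) < d := by exact_mod_cast hd
  have hpsd : Vn.PosSemidef := by
    rw [hVn]
    refine hV.posSemidef.add ?_
    refine Finset.sum_induction _ _ (fun a b ha hb => ha.add hb) Matrix.PosSemidef.zero ?_
    exact fun t _ => psd_vecMulVec (X t)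
  set μ := hpsd.1.eigenvalues with hμ
  have hμnn : ∀ i, 0 ≤ μ i := hpsd.eigenvalues_nonneg
  have htr : Vn.trace ≤ V.trace + n * L ^ 2 := by
    rw [hVn, Matrix.trace_add, Matrix.trace_sum]
    have hb : ∀ t ∈ Finset.range n, (vecMulVec (X t) (X t)).trace ≤ L ^ 2 := by
      intro t ht
      have h0 : 0 ≤ X t ⬝ᵥ X t := by
        simp only [dotProduct]
        exact Finset.sum_nonneg fun i _ => mul_self_nonneg _
      have heq : (vecMulVec (X t) (X t)).trace = X t ⬝ᵥ X t := by
        simp [Matrix.trace, Matrix.diag, vecMulVec_apply, dotProduct]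
      rw [heq]
      calc X t ⬝ᵥ X t = Real.sqrt (X t ⬝ᵥ X t) ^ 2 := (Real.sq_sqrt h0).symm
        _ ≤ L ^ 2 := pow_le_pow_left₀ (Real.sqrt_nonneg _) (hX t ht) 2
    calc V.trace + ∑ t ∈ Finset.range n, (vecMulVec (X t) (X t)).trace
        ≤ V.trace + ∑ t ∈ Finset.range n, L ^ 2 :=
          add_le_add_right (Finset.sum_le_sum hb) _
      _ = V.trace + n * L ^ 2 := by simp [mul_comm]
  have hdet : Vn.det = ∏ i, μ i := by
    have := hpsd.1.det_eq_prod_eigenvalues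
    simpa using this
  have htrace : Vn.trace = ∑ i, μ i := trace_eq_sum_eigs hpsd.1
  have hsum_nn : 0 ≤ Vn.trace := htrace ▸ Finset.sum_nonneg fun i _ => hμnn i
  have amgm := Real.geom_mean_le_arith_mean_weighted Finset.univ (fun _ => (d:ℝ)⁻¹) μ
    (fun i _ => by positivity) (by simp; field_simp) (fun i _ => hμnn i)
  have key : Vn.det ≤ (Vn.trace / d) ^ d := by
    rw [hdet, htrace]
    have h2 : (∏ i, μ i ^ ((d:ℝ)⁻¹)) ^ (d:ℕ) = ∏ i, μ i := by
      rw [← Finset.prod_pow]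
      refine Finset.prod_congr rfl fun i _ => ?_
      rw [← Real.rpow_natCast (μ i ^ ((d:ℝ)⁻¹)), ← Real.rpow_mul (hμnn i),
        inv_mul_cancel₀ (ne_of_gt hdpos), Real.rpow_one]
    have h3 : ∑ i, (d:ℝ)⁻¹ * μ i = (∑ i, μ i) / d := by
      rw [← Finset.mul_sum]
      ring
    calc ∏ i, μ i = (∏ i, μ i ^ ((d:ℝ)⁻¹)) ^ (d:ℕ) := h2.symm
      _ ≤ ((∑ i, μ i) / d) ^ d := by
          rw [← h3]
          exact pow_le_pow_left₀ (Finset.prod_nonneg fun i _ =>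
            Real.rpow_nonneg (hμnn i) _) amgm d
  calc Vn.det ≤ (Vn.trace / d) ^ d := key
    _ ≤ ((V.trace + n * L ^ 2) / d) ^ d := by
        exact pow_le_pow_left₀ (div_nonneg hsum_nn hdpos.le)
          (div_le_div_of_nonneg_right htr hdpos.le) d
end

section
/- Let λ > 0, L ≥ 0, and let x_1, …, x_n ∈ ℝ^d satisfy ‖x_t‖₂ ≤ L for all t. Then det(λI + Σ_{t=1}^n x_t x_tᵀ) ≤ λ^d · (1 + L²/λ)^n. -/
open Matrix

namespace DetRegAux

variable {d : ℕ}

lemma vecMulVec_mulVec' (w v y : Fin d → ℝ) :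
    vecMulVec w v *ᵥ y = (v ⬝ᵥ y) • w := by
  ext i
  simp [mulVec, vecMulVec_apply, dotProduct, Finset.mul_sum, mul_assoc, mul_comm, mul_left_comm]

lemma sum_mulVec' {ι : Type*} (s : Finset ι) (M : ι → Matrix (Fin d) (Fin d) ℝ) (y : Fin d → ℝ) :
    (∑ t ∈ s, M t) *ᵥ y = ∑ t ∈ s, M t *ᵥ y := by
  ext i
  simp [mulVec, dotProduct, Matrix.sum_apply, Finset.sum_mul, Finset.sum_apply]
  rw [Finset.sum_comm]

lemma quad_eq (lam : ℝ) (n : ℕ) (x : ℕ → Fin d → ℝ) (y : Fin d → ℝ) :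
    y ⬝ᵥ ((lam • (1 : Matrix (Fin d) (Fin d) ℝ) +
        ∑ t ∈ Finset.range n, vecMulVec (x t) (x t)) *ᵥ y) =
      lam * (y ⬝ᵥ y) + ∑ t ∈ Finset.range n, (x t ⬝ᵥ y) ^ 2 := by
  rw [add_mulVec, smul_mulVec, one_mulVec, sum_mulVec', dotProduct_add, dotProduct_smul]
  congr 1
  simp only [vecMulVec_mulVec', dotProduct, Finset.mul_sum, smul_eq_mul, Finset.sum_apply,
    Pi.smul_apply]
  rw [Finset.sum_comm]
  refine Finset.sum_congr rfl fun t _ => ?_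
  have h : ∀ j, y j * ((∑ i : Fin d, x t i * y i) * x t j)
      = (∑ i : Fin d, x t i * y i) * (x t j * y j) := fun j => by ring
  simp_rw [h, ← Finset.mul_sum, sq]

lemma dot_self_nonneg (y : Fin d → ℝ) : 0 ≤ y ⬝ᵥ y :=
  Finset.sum_nonneg fun i _ => mul_self_nonneg _

lemma posDef_A (lam : ℝ) (hlam : 0 < lam) (n : ℕ) (x : ℕ → Fin d → ℝ) :
    (lam • (1 : Matrix (Fin d) (Fin d) ℝ) +
        ∑ t ∈ Finset.range n, vecMulVec (x t) (x t)).PosDef := by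
  rw [posDef_iff_dotProduct_mulVec]
  constructor
  · ext i j
    simp only [conjTranspose_apply, Matrix.add_apply, Matrix.smul_apply, Matrix.one_apply,
      Matrix.sum_apply, vecMulVec_apply, star_trivial]
    congr 1
    · congr 1
      simp [eq_comm]
    · exact Finset.sum_congr rfl fun t _ => mul_comm _ _
  · intro y hy
    rw [star_trivial, quad_eq]
    have h1 : 0 < y ⬝ᵥ y := by
      rcases lt_or_eq_of_le (dot_self_nonneg y) with h | h
      · exact h
      · exact absurd (dotProduct_self_eq_zero.mp h.symm) hy
    have h2 : (0:ℝ) ≤ ∑ t ∈ Finset.range n, (x t ⬝ᵥ y) ^ 2 :=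
      Finset.sum_nonneg fun t _ => sq_nonneg _
    positivity

end DetRegAux

open DetRegAux in
/-- `det(λI + ∑ₜ xₜxₜᵀ) ≤ λ^d (1 + L²/λ)^n` when `‖xₜ‖₂ ≤ L`. -/
theorem det_reg_sum_outer_le {d : ℕ} (lam L : ℝ) (hlam : 0 < lam) (hL : 0 ≤ L)
    (n : ℕ) (x : ℕ → (Fin d → ℝ))
    (hx : ∀ t ∈ Finset.range n, Real.sqrt (x t ⬝ᵥ x t) ≤ L) :
    (lam • (1 : Matrix (Fin d) (Fin d) ℝ) +
        ∑ t ∈ Finset.range n, vecMulVec (x t) (x t)).det ≤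
      lam ^ d * (1 + L ^ 2 / lam) ^ n := by
  induction n with
  | zero =>
    simp [det_smul]
  | succ n ih =>
    have hx' : ∀ t ∈ Finset.range n, Real.sqrt (x t ⬝ᵥ x t) ≤ L := fun t ht =>
      hx t (Finset.mem_range.mpr (Nat.lt_succ_of_lt (Finset.mem_range.mp ht)))
    set A : Matrix (Fin d) (Fin d) ℝ :=
      lam • (1 : Matrix (Fin d) (Fin d) ℝ) + ∑ t ∈ Finset.range n, vecMulVec (x t) (x t) with hA
    have hApd : A.PosDef := posDef_A lam hlam n x
    have hAdet : IsUnit A.det := hApd.isUnit.map (detMonoidHom)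
    -- rewrite the step
    have hstep : lam • (1 : Matrix (Fin d) (Fin d) ℝ) +
        ∑ t ∈ Finset.range (n+1), vecMulVec (x t) (x t)
        = A + replicateCol (Fin 1) (x n) * replicateRow (Fin 1) (x n) := by
      rw [Finset.sum_range_succ, ← add_assoc, vecMulVec_eq (Fin 1)]
      rfl
    set c : ℝ := x n ⬝ᵥ (A⁻¹ *ᵥ x n) with hc
    have hdet : (A + replicateCol (Fin 1) (x n) * replicateRow (Fin 1) (x n)).det = A.det * (1 + c) := by
      nth_rewrite 1 [← Matrix.mul_one A]
      rw [← Matrix.mul_nonsing_inv_cancel_left A (replicateCol (Fin 1) (x n) * replicateRow (Fin 1) (x n)) hAdet,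
        ← Matrix.mul_add, det_mul, ← Matrix.mul_assoc, det_one_add_mul_comm, det_fin_one]
      congr 1
    rw [hstep, hdet]
    -- bound c
    set y : Fin d → ℝ := A⁻¹ *ᵥ x n with hy
    have hAy : A *ᵥ y = x n := by
      rw [hy, mulVec_mulVec, mul_nonsing_inv _ hAdet, one_mulVec]
    have hq : c = lam * (y ⬝ᵥ y) + ∑ t ∈ Finset.range n, (x t ⬝ᵥ y) ^ 2 := by
      rw [← quad_eq lam n x y, ← hA, hAy, dotProduct_comm]
    have hcnn : 0 ≤ c := by
      rw [hq]
      have := dot_self_nonneg y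
      have h2 : (0:ℝ) ≤ ∑ t ∈ Finset.range n, (x t ⬝ᵥ y) ^ 2 :=
        Finset.sum_nonneg fun t _ => sq_nonneg _
      positivity
    have hyy : lam * (y ⬝ᵥ y) ≤ c := by
      rw [hq]
      exact le_add_of_nonneg_right (Finset.sum_nonneg fun t _ => sq_nonneg _)
    have hxn : x n ⬝ᵥ x n ≤ L ^ 2 := by
      have h := hx n (Finset.mem_range.mpr (Nat.lt_succ_self n))
      have h0 := dot_self_nonneg (x n)
      calc x n ⬝ᵥ x n = Real.sqrt (x n ⬝ᵥ x n) ^ 2 := (Real.sq_sqrt h0).symm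
        _ ≤ L ^ 2 := by gcongr
    have hcs : c ^ 2 ≤ (x n ⬝ᵥ x n) * (y ⬝ᵥ y) := by
      have := Finset.sum_mul_sq_le_sq_mul_sq Finset.univ (x n) y
      simpa [dotProduct, sq, mul_comm, c] using this
    have hcle : c ≤ L ^ 2 / lam := by
      rcases eq_or_lt_of_le hcnn with h0 | h0
      · rw [← h0]; positivity
      · have hk : c * c ≤ (L ^ 2 / lam) * c := by
          calc c * c = c ^ 2 := (sq c).symm
            _ ≤ (x n ⬝ᵥ x n) * (y ⬝ᵥ y) := hcs
            _ ≤ L ^ 2 * (y ⬝ᵥ y) := by gcongr; exact dot_self_nonneg y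
            _ = (L ^ 2 / lam) * (lam * (y ⬝ᵥ y)) := by field_simp
            _ ≤ (L ^ 2 / lam) * c := by gcongr
        exact le_of_mul_le_mul_right hk h0
    calc A.det * (1 + c) ≤ (lam ^ d * (1 + L ^ 2 / lam) ^ n) * (1 + L ^ 2 / lam) := by
          have hb : (0:ℝ) < 1 + c := by linarith
          apply mul_le_mul (ih hx') (by linarith) (le_of_lt hb) (by positivity)
      _ = lam ^ d * (1 + L ^ 2 / lam) ^ (n+1) := by ring
end

section
/- Let A and B be d×d positive definite real matrices such that B − A is positive semidefinite, and let D be a d×d positive semidefinite real matrix. Then det(B + D)·det(A) ≤ det(A + D)·det(B); equivalently, det(B + D)/det(B) ≤ det(A + D)/det(A). -/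
/-! Write `D = Qᴴ Q`. By the matrix determinant lemma, `det (P + D) / det P = det (1 + Q P⁻¹ Qᴴ)`
for every positive definite `P`. Inversion reverses the Loewner order (the block matrix
`[[B, 1], [1, A⁻¹]]` has Schur complements `B - A` and `A⁻¹ - B⁻¹`), so `Q B⁻¹ Qᴴ ≤ Q A⁻¹ Qᴴ`,
and the determinant is monotone on positive definite matrices. -/

open Matrix

open scoped MatrixOrder

namespace Matrix

variable {n : Type*} [Fintype n] [DecidableEq n]

lemma PosSemidef.one_le_det_one_add {F : Matrix n n ℝ} (hF : F.PosSemidef) :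
    1 ≤ (1 + F).det := by
  set U : Matrix n n ℝ := (hF.1.eigenvectorUnitary : Matrix n n ℝ)
  have hU : U * star U = 1 := Unitary.mul_star_self_of_mem hF.1.eigenvectorUnitary.2
  have hdiag : 1 + F = U * diagonal (fun i => 1 + hF.1.eigenvalues i) * star U := by
    rw [← diagonal_add, diagonal_one, Matrix.mul_add, Matrix.add_mul, Matrix.mul_one, hU]
    conv_lhs => rw [hF.1.spectral_theorem, Unitary.conjStarAlgAut_apply]
    rfl
  have hdetU : U.det * (star U).det = 1 := by rw [← det_mul, hU, det_one]
  calc (1 : ℝ) ≤ ∏ i, (1 + hF.1.eigenvalues i) :=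
        Finset.one_le_prod fun i _ => le_add_of_nonneg_right (hF.eigenvalues_nonneg i)
    _ = (1 + F).det := by
        rw [hdiag, det_mul, det_mul, det_diagonal, mul_right_comm, hdetU, one_mul]

lemma PosSemidef.exists_eq_conjTranspose_mul_self {E : Matrix n n ℝ} (hE : E.PosSemidef) :
    ∃ Q : Matrix n n ℝ, E = Qᴴ * Q :=
  ⟨CFC.sqrt E, by
    rw [(CFC.sqrt_nonneg E).posSemidef.1.eq, CFC.sqrt_mul_sqrt_self E hE.nonneg]⟩

lemma PosDef.det_le_det {P P' : Matrix n n ℝ} (hP : P.PosDef) (h : P ≤ P') :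
    P.det ≤ P'.det := by
  obtain ⟨Q, hQ⟩ := h.exists_eq_conjTranspose_mul_self
  rw [← add_sub_cancel P P', hQ, det_add_mul _ _ hP.det_pos.ne'.isUnit]
  exact le_mul_of_one_le_right hP.det_pos.le
    (hP.inv.posSemidef.mul_mul_conjTranspose_same Q).one_le_det_one_add

lemma PosDef.inv_le_inv {A B : Matrix n n ℝ} (hA : A.PosDef) (hB : B.PosDef) (h : A ≤ B) :
    B⁻¹ ≤ A⁻¹ := by
  let := hB.isUnit.invertible
  let := hA.inv.isUnit.invertible
  have hblock : (fromBlocks B 1 1ᴴ A⁻¹).PosSemidef := by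
    rw [fromBlocks₂₂ B 1 hA.inv, nonsing_inv_nonsing_inv A hA.det_pos.ne'.isUnit]
    simpa using le_iff.mp h
  simpa [le_iff] using (fromBlocks₁₁ 1 A⁻¹ hB).mp hblock

end Matrix

/-- For positive definite `A ⪯ B` and positive semidefinite `D`,
`det(B + D)/det B ≤ det(A + D)/det A`. -/
theorem det_ratio_antitone {d : ℕ} (A B D : Matrix (Fin d) (Fin d) ℝ)
    (hA : A.PosDef) (hB : B.PosDef) (hBA : (B - A).PosSemidef)
    (hD : D.PosSemidef) :
    (B + D).det * A.det ≤ (A + D).det * B.det ∧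
    (B + D).det / B.det ≤ (A + D).det / A.det := by
  obtain ⟨Q, rfl⟩ := hD.exists_eq_conjTranspose_mul_self
  have hconj : Q * B⁻¹ * Qᴴ ≤ Q * A⁻¹ * Qᴴ := by
    have := star_left_conjugate_le_conjugate (hA.inv_le_inv hB hBA) Qᴴ
    rwa [star_eq_conjTranspose, conjTranspose_conjTranspose] at this
  have hdet : (1 + Q * B⁻¹ * Qᴴ).det ≤ (1 + Q * A⁻¹ * Qᴴ).det :=
    (PosDef.one.add_posSemidef (hB.inv.posSemidef.mul_mul_conjTranspose_same Q)).det_le_det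
      (add_le_add_right hconj 1)
  have hratio : (B + Qᴴ * Q).det / B.det ≤ (A + Qᴴ * Q).det / A.det := by
    rwa [det_add_mul _ _ hA.det_pos.ne'.isUnit, det_add_mul _ _ hB.det_pos.ne'.isUnit,
      mul_div_cancel_left₀ _ hA.det_pos.ne', mul_div_cancel_left₀ _ hB.det_pos.ne']
  exact ⟨(div_le_div_iff₀ hB.det_pos hA.det_pos).mp hratio, hratio⟩
end

section
/- Let V be a d×d positive definite real matrix, let X_1, …, X_n ∈ ℝ^d, and define V_t = V + Σ_{s=1}^t X_s X_sᵀ for t = 0, 1, …, n. Then Σ_{t=1}^n min{1, √(X_tᵀ V_{t-1}⁻¹ X_t)} ≤ √(2n·(log det(V_n) − log det(V))). -/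
/-!
By the matrix determinant lemma each rank-one update multiplies `det` by `1 + xᵀ V⁻¹ x`, so
`log det Vₙ - log det V` telescopes to `∑ₜ log (1 + qₜ)` with `qₜ = Xₜᵀ Vₜ₋₁⁻¹ Xₜ ≥ 0`.
Since `(min 1 √q)² = min 1 q ≤ 2 log (1 + q)`, Cauchy–Schwarz on `∑ₜ min 1 √qₜ` gives the bound.
-/

open Matrix

theorem Matrix.det_add_vecMulVec_s12 {m α : Type*} [Fintype m] [DecidableEq m] [CommRing α]
    {A : Matrix m m α} (hA : IsUnit A.det) (u v : m → α) :
    (A + vecMulVec u v).det = A.det * (1 + v ⬝ᵥ (A⁻¹ *ᵥ u)) := by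
  rw [vecMulVec_eq Unit, det_add_replicateCol_mul_replicateRow hA, Matrix.mul_assoc,
    ← replicateCol_mulVec, det_one_add_mul_comm, det_one_add_replicateCol_mul_replicateRow]

theorem Real.min_one_le_two_mul_log_one_add {u : ℝ} (hu : 0 ≤ u) :
    min 1 u ≤ 2 * Real.log (1 + u) := by
  refine le_trans ?_ (mul_le_mul_of_nonneg_left (Real.le_log_one_add_of_nonneg hu) zero_le_two)
  rw [← mul_div_assoc, le_div_iff₀ (by linarith)]
  rcases le_total u 1 with h | h
  · rw [min_eq_right h]; nlinarith
  · rw [min_eq_left h]; linarith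

theorem Finset.sum_le_sqrt_card_mul_sum_sq {ι : Type*} (s : Finset ι) (f : ι → ℝ) :
    ∑ i ∈ s, f i ≤ √(s.card * ∑ i ∈ s, f i ^ 2) :=
  Real.le_sqrt_of_sq_le (sq_sum_le_card_mul_sum_sq ..)

theorem Real.min_one_sqrt_sq {q : ℝ} (hq : 0 ≤ q) : min 1 √q ^ 2 = min 1 q := by
  rw [← Real.sq_sqrt (le_min zero_le_one hq), Real.sqrt_monotone.map_min, Real.sqrt_one]

theorem Matrix.PosDef.log_det_add_vecMulVec_self {m : Type*} [Fintype m] [DecidableEq m]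
    {A : Matrix m m ℝ} (hA : A.PosDef) (x : m → ℝ) :
    Real.log (A + vecMulVec x x).det = Real.log A.det + Real.log (1 + x ⬝ᵥ (A⁻¹ *ᵥ x)) := by
  have hq : 0 ≤ x ⬝ᵥ (A⁻¹ *ᵥ x) := by simpa using hA.inv.posSemidef.dotProduct_mulVec_nonneg x
  rw [det_add_vecMulVec_s12 hA.det_pos.ne'.isUnit, Real.log_mul hA.det_pos.ne' (by positivity)]

section EllipticalPotential

variable {m : Type*} [Fintype m] {W : ℕ → Matrix m m ℝ} {X : ℕ → m → ℝ}

theorem posDef_of_succ_eq_add_vecMulVec (h0 : (W 0).PosDef)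
    (hW : ∀ t, W (t + 1) = W t + vecMulVec (X t) (X t)) (t : ℕ) : (W t).PosDef := by
  induction t with
  | zero => exact h0
  | succ t ih =>
    rw [hW t]
    simpa using ih.add_posSemidef (posSemidef_vecMulVec_self_star (X t))

theorem log_det_sub_log_det_eq_sum_log [DecidableEq m] (h0 : (W 0).PosDef)
    (hW : ∀ t, W (t + 1) = W t + vecMulVec (X t) (X t)) (n : ℕ) :
    Real.log (W n).det - Real.log (W 0).det =
      ∑ t ∈ Finset.range n, Real.log (1 + X t ⬝ᵥ ((W t)⁻¹ *ᵥ X t)) := by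
  rw [← Finset.sum_range_sub fun t => Real.log (W t).det]
  refine Finset.sum_congr rfl fun t _ => ?_
  rw [hW t, Matrix.PosDef.log_det_add_vecMulVec_self (posDef_of_succ_eq_add_vecMulVec h0 hW t)]
  ring

theorem sum_min_one_sqrt_le_sqrt_log_det [DecidableEq m] (h0 : (W 0).PosDef)
    (hW : ∀ t, W (t + 1) = W t + vecMulVec (X t) (X t)) (n : ℕ) :
    ∑ t ∈ Finset.range n, min 1 √(X t ⬝ᵥ ((W t)⁻¹ *ᵥ X t)) ≤
      √(2 * n * (Real.log (W n).det - Real.log (W 0).det)) := by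
  set q : ℕ → ℝ := fun t => X t ⬝ᵥ ((W t)⁻¹ *ᵥ X t)
  have hq (t : ℕ) : 0 ≤ q t := by
    have hWt := posDef_of_succ_eq_add_vecMulVec h0 hW t
    simpa using hWt.inv.posSemidef.dotProduct_mulVec_nonneg (X t)
  have hsum : ∑ t ∈ Finset.range n, min 1 √(q t) ^ 2 ≤
      2 * (Real.log (W n).det - Real.log (W 0).det) := by
    rw [log_det_sub_log_det_eq_sum_log h0 hW, Finset.mul_sum]
    refine Finset.sum_le_sum fun t _ => ?_
    rw [Real.min_one_sqrt_sq (hq t)]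
    exact Real.min_one_le_two_mul_log_one_add (hq t)
  calc ∑ t ∈ Finset.range n, min 1 √(q t)
      ≤ √(n * ∑ t ∈ Finset.range n, min 1 √(q t) ^ 2) := by
        simpa using Finset.sum_le_sqrt_card_mul_sum_sq (Finset.range n) fun t => min 1 √(q t)
    _ ≤ √(2 * n * (Real.log (W n).det - Real.log (W 0).det)) := by
        rw [mul_assoc, mul_left_comm]
        gcongr

end EllipticalPotential

/-- Square-root elliptical potential bound:
`∑ₜ min {1, √(Xₜᵀ Vₜ₋₁⁻¹ Xₜ)} ≤ √(2n (log det Vₙ − log det V))`, where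
`Vₜ = V + ∑_{s<t} X_s X_sᵀ` (vectors indexed from `0`). -/
theorem sum_min_sqrt_quadratic_le {d : ℕ} (V : Matrix (Fin d) (Fin d) ℝ)
    (hV : V.PosDef) (n : ℕ) (X : ℕ → (Fin d → ℝ))
    (W : ℕ → Matrix (Fin d) (Fin d) ℝ)
    (hW : ∀ t, W t = V + ∑ s ∈ Finset.range t, vecMulVec (X s) (X s)) :
    ∑ t ∈ Finset.range n, min 1 (Real.sqrt (X t ⬝ᵥ ((W t)⁻¹ *ᵥ X t))) ≤
      Real.sqrt (2 * n * (Real.log (W n).det - Real.log V.det)) := by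
  have hW0 : W 0 = V := by simp [hW 0]
  have hstep (t : ℕ) : W (t + 1) = W t + vecMulVec (X t) (X t) := by
    rw [hW, hW, Finset.sum_range_succ, add_assoc]
  simpa only [hW0] using sum_min_one_sqrt_le_sqrt_log_det (hW0 ▸ hV) hstep n
end

section
/- Let V be a d×d positive definite real matrix, let α ≥ 0, and let θ*, θ̂ ∈ ℝ^d satisfy (θ̂ − θ*)ᵀ V (θ̂ − θ*) ≤ α². Let 𝒜 ⊆ ℝ^d be a finite nonempty set and suppose x_t ∈ 𝒜 maximizes the UCB score x ↦ xᵀθ̂ + α·√(xᵀV⁻¹x) over 𝒜. Then for every x* ∈ 𝒜, x*ᵀθ* − x_tᵀθ* ≤ 2α·√(x_tᵀ V⁻¹ x_t). -/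
/-!
Cauchy–Schwarz for the inner product given by `V⁻¹` bounds the estimation error along any arm:
`|xᵀ(θ̂ - θ*)| ≤ ‖x‖_{V⁻¹} ‖θ̂ - θ*‖_V ≤ α ‖x‖_{V⁻¹}`. Hence the UCB score is optimistic, and
`x*ᵀθ* ≤ UCB(x*) ≤ UCB(x_t) ≤ x_tᵀθ* + 2α ‖x_t‖_{V⁻¹}`.
-/

open Matrix

namespace Matrix

variable {n : Type*} [Fintype n]

theorem IsSymm.dotProduct_mulVec_comm {R : Type*} [CommSemiring R] {M : Matrix n n R}
    (hM : M.IsSymm) (x y : n → R) : x ⬝ᵥ (M *ᵥ y) = y ⬝ᵥ (M *ᵥ x) := by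
  rw [dotProduct_mulVec, ← mulVec_transpose, hM.eq, dotProduct_comm]

theorem PosSemidef.dotProduct_mulVec_sq_le {R : Type*} [CommRing R] [LinearOrder R]
    [IsStrictOrderedRing R] [StarRing R] [TrivialStar R] {M : Matrix n n R}
    (hM : M.PosSemidef) (x y : n → R) :
    (x ⬝ᵥ (M *ᵥ y)) ^ 2 ≤ (x ⬝ᵥ (M *ᵥ x)) * (y ⬝ᵥ (M *ᵥ y)) := by
  classical
  have hsymm : (toLinearMap₂' R M).IsSymm := LinearMap.isSymm_def.2 fun x y ↦ by
    simpa only [toLinearMap₂'_apply', RingHom.id_apply] using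
      (isHermitian_iff_isSymm.1 hM.isHermitian).dotProduct_mulVec_comm x y
  simpa only [toLinearMap₂'_apply'] using
    LinearMap.BilinForm.apply_sq_le_of_symm (toLinearMap₂' R M)
      (fun z ↦ by simpa [toLinearMap₂'_apply'] using hM.dotProduct_mulVec_nonneg z) hsymm x y

theorem PosDef.dotProduct_sq_le {K : Type*} [Field K] [LinearOrder K]
    [IsStrictOrderedRing K] [StarRing K] [TrivialStar K] [DecidableEq n] {V : Matrix n n K}
    (hV : V.PosDef) (x y : n → K) :
    (x ⬝ᵥ y) ^ 2 ≤ (x ⬝ᵥ (V⁻¹ *ᵥ x)) * (y ⬝ᵥ (V *ᵥ y)) := by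
  let _ := hV.isUnit.invertible
  have hcs := hV.inv.posSemidef.dotProduct_mulVec_sq_le x (V *ᵥ y)
  rwa [mulVec_mulVec, inv_mul_of_invertible, one_mulVec, dotProduct_comm (V *ᵥ y)] at hcs

theorem PosDef.abs_dotProduct_le [DecidableEq n] {V : Matrix n n ℝ} (hV : V.PosDef)
    (x y : n → ℝ) :
    |x ⬝ᵥ y| ≤ √(x ⬝ᵥ (V⁻¹ *ᵥ x)) * √(y ⬝ᵥ (V *ᵥ y)) := by
  rw [← Real.sqrt_mul (by simpa using hV.inv.posSemidef.dotProduct_mulVec_nonneg x)]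
  exact Real.abs_le_sqrt (hV.dotProduct_sq_le x y)

end Matrix

theorem ucb_single_step_regret_general {d : ℕ} (V : Matrix (Fin d) (Fin d) ℝ)
    (hV : V.PosDef) (α : ℝ) (hα : 0 ≤ α) (θstar θhat : Fin d → ℝ)
    (hconf : (θhat - θstar) ⬝ᵥ (V *ᵥ (θhat - θstar)) ≤ α ^ 2)
    (𝒜 : Finset (Fin d → ℝ)) (xt : Fin d → ℝ)
    (hmax : ∀ x ∈ 𝒜, x ⬝ᵥ θhat + α * Real.sqrt (x ⬝ᵥ (V⁻¹ *ᵥ x)) ≤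
      xt ⬝ᵥ θhat + α * Real.sqrt (xt ⬝ᵥ (V⁻¹ *ᵥ xt))) :
    ∀ xstar ∈ 𝒜, xstar ⬝ᵥ θstar - xt ⬝ᵥ θstar ≤
      2 * α * Real.sqrt (xt ⬝ᵥ (V⁻¹ *ᵥ xt)) := by
  have width (x : Fin d → ℝ) : |x ⬝ᵥ θhat - x ⬝ᵥ θstar| ≤ α * √(x ⬝ᵥ (V⁻¹ *ᵥ x)) :=
    calc |x ⬝ᵥ θhat - x ⬝ᵥ θstar|
        ≤ √(x ⬝ᵥ (V⁻¹ *ᵥ x)) * √((θhat - θstar) ⬝ᵥ (V *ᵥ (θhat - θstar))) := by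
          rw [← dotProduct_sub]; exact hV.abs_dotProduct_le x _
      _ ≤ √(x ⬝ᵥ (V⁻¹ *ᵥ x)) * α := by
          gcongr; exact (Real.sqrt_le_left hα).2 hconf
      _ = α * √(x ⬝ᵥ (V⁻¹ *ᵥ x)) := mul_comm _ _
  intro xstar hxstar
  have hstar := abs_le.1 (width xstar)
  have ht := abs_le.1 (width xt)
  rw [sub_le_iff_le_add]
  calc xstar ⬝ᵥ θstar ≤ xstar ⬝ᵥ θhat + α * √(xstar ⬝ᵥ (V⁻¹ *ᵥ xstar)) := by linarith
    _ ≤ xt ⬝ᵥ θhat + α * √(xt ⬝ᵥ (V⁻¹ *ᵥ xt)) := hmax xstar hxstar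
    _ ≤ 2 * α * √(xt ⬝ᵥ (V⁻¹ *ᵥ xt)) + xt ⬝ᵥ θstar := by linarith

/-- Deterministic single-step regret bound for the UCB arm selection rule:
if `θ*` lies in the confidence ellipsoid of radius `α` around `θ̂` and `x_t`
maximizes the UCB score over the arm set `𝒜`, then for any `x* ∈ 𝒜`,
`x*ᵀθ* − x_tᵀθ* ≤ 2α √(x_tᵀ V⁻¹ x_t)`. -/
theorem ucb_single_step_regret {d : ℕ} (V : Matrix (Fin d) (Fin d) ℝ)
    (hV : V.PosDef) (α : ℝ) (hα : 0 ≤ α) (θstar θhat : Fin d → ℝ)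
    (hconf : (θhat - θstar) ⬝ᵥ (V *ᵥ (θhat - θstar)) ≤ α ^ 2)
    (𝒜 : Finset (Fin d → ℝ)) (h𝒜 : 𝒜.Nonempty) (xt : Fin d → ℝ)
    (hxt : xt ∈ 𝒜)
    (hmax : ∀ x ∈ 𝒜, x ⬝ᵥ θhat + α * Real.sqrt (x ⬝ᵥ (V⁻¹ *ᵥ x)) ≤
      xt ⬝ᵥ θhat + α * Real.sqrt (xt ⬝ᵥ (V⁻¹ *ᵥ xt))) :
    ∀ xstar ∈ 𝒜, xstar ⬝ᵥ θstar - xt ⬝ᵥ θstar ≤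
      2 * α * Real.sqrt (xt ⬝ᵥ (V⁻¹ *ᵥ xt)) :=
  ucb_single_step_regret_general V hV α hα θstar θhat hconf 𝒜 xt hmax
end
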